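/- Let p : ℝ → ℝ be a smooth 2π-periodic function, the support function of an ℓ-convex Legendre curve with ℓ = 1, with β = p + p'', algebraic length L = ∫₀^{2π} p(θ) dθ and algebraic area A = (1/2)∫₀^{2π} p(θ)β(θ) dθ. Then for every real ξ ≤ 24, ∫₀^{2π} β'(θ)² dθ ≥ ξ(L²/(4π) − A). Moreover, for every ξ < 24, equality holds if and only if the curve is a circle, i.e. p(θ) = a₀ + a₁ cos θ + b₁ sin θ for some real constants a₀, a₁, b₁. -/

import Mathlib

open Real

/-- The curvature quantity `β = p + p''` of an ℓ-convex Legendre curve (ℓ = 1)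
with support function `p`. -/
noncomputable def betaF (p : ℝ → ℝ) : ℝ → ℝ := fun θ => p θ + iteratedDeriv 2 p θ

/-- The algebraic length `L = ∫₀^{2π} p`. -/
noncomputable def algLen (p : ℝ → ℝ) : ℝ := ∫ θ in (0:ℝ)..(2 * π), p θ

/-- The algebraic area `A = (1/2) ∫₀^{2π} p β`. -/
noncomputable def algArea (p : ℝ → ℝ) : ℝ :=
  (1 / 2) * ∫ θ in (0:ℝ)..(2 * π), p θ * betaF p θ

/-!
Expand `p` in its Fourier series on `[0, 2π]` with coefficients `cₙ`. Parseval's identity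
together with `∫ p p'' = -∫ p'²` gives `L²/(4π) - A = π ∑_{n ≠ 0} (n² - 1) |cₙ|²` and
`∫ β'² = 2π ∑ n² (n² - 1)² |cₙ|²`, and `12 (n² - 1) ≤ n² (n² - 1)²` for every integer `n ≠ 0`.
For `ξ < 24` equality forces both sides to vanish, so `β` is constant, and the solutions of
`p + p'' = const` are exactly the circles.
-/

open MeasureTheory

theorem Function.Periodic.deriv {𝕜 F : Type*} [NontriviallyNormedField 𝕜] [NormedAddCommGroup F]
    [NormedSpace 𝕜 F] {f : 𝕜 → F} {T : 𝕜} (h : Function.Periodic f T) :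
    Function.Periodic (deriv f) T := fun x => by
  rw [← deriv_comp_add_const, funext h]

theorem Function.Periodic.iteratedDeriv {𝕜 F : Type*} [NontriviallyNormedField 𝕜]
    [NormedAddCommGroup F] [NormedSpace 𝕜 F] {f : 𝕜 → F} {T : 𝕜} (h : Function.Periodic f T)
    (n : ℕ) : Function.Periodic (iteratedDeriv n f) T := by
  induction n with
  | zero => simpa
  | succ n ih => rw [iteratedDeriv_succ]; exact ih.deriv

theorem Function.Periodic.eq_zero_of_integral_sq_eq_zero {g : ℝ → ℝ} {T : ℝ}
    (hg : Continuous g) (hper : Function.Periodic g T) (hT : 0 < T)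
    (h : ∫ x in (0:ℝ)..T, g x ^ 2 = 0) (x : ℝ) : g x = 0 := by
  obtain ⟨y, hy, hxy⟩ := hper.exists_mem_Ico₀ hT x
  rw [hxy]
  by_contra hne
  have hpos : 0 < ∫ x in (0:ℝ)..T, g x ^ 2 := by
    simpa using intervalIntegral.integral_lt_integral_of_continuousOn_of_le_of_exists_lt hT
      continuousOn_const (hg.pow 2).continuousOn (fun x _ => sq_nonneg (g x))
      ⟨y, Set.Ico_subset_Icc_self hy, sq_pos_of_ne_zero hne⟩
  exact hpos.ne' h

theorem eq_zero_of_hasDerivAt_of_hasDerivAt_neg {w w' : ℝ → ℝ}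
    (hw : ∀ x, HasDerivAt w (w' x) x) (hw' : ∀ x, HasDerivAt w' (-w x) x)
    (h0 : w 0 = 0) (h0' : w' 0 = 0) (x : ℝ) : w x = 0 := by
  -- the energy `w² + w'²` is conserved
  have henergy (x : ℝ) : HasDerivAt (fun x => w x ^ 2 + w' x ^ 2) 0 x :=
    (((hw x).pow 2).add ((hw' x).pow 2)).congr_deriv (by ring)
  have hconst := is_const_of_deriv_eq_zero (fun x => (henergy x).differentiableAt)
    (fun x => (henergy x).deriv) x 0
  simp only [h0, h0'] at hconst
  nlinarith [sq_nonneg (w x), sq_nonneg (w' x)]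

theorem eq_cos_sin_of_add_deriv_deriv_eq_const {f : ℝ → ℝ} (hf : Differentiable ℝ f)
    (hf' : Differentiable ℝ (deriv f)) {a : ℝ} (h : ∀ x, f x + deriv (deriv f) x = a) (x : ℝ) :
    f x = a + (f 0 - a) * Real.cos x + deriv f 0 * Real.sin x := by
  have hw (x : ℝ) :
      HasDerivAt (fun x => f x - (a + (f 0 - a) * Real.cos x + deriv f 0 * Real.sin x))
        (deriv f x - (-(f 0 - a) * Real.sin x + deriv f 0 * Real.cos x)) x :=
    ((hf x).hasDerivAt.sub ((((Real.hasDerivAt_cos x).const_mul (f 0 - a)).const_add a).add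
      ((Real.hasDerivAt_sin x).const_mul (deriv f 0)))).congr_deriv (by ring)
  have hw' (x : ℝ) :
      HasDerivAt (fun x => deriv f x - (-(f 0 - a) * Real.sin x + deriv f 0 * Real.cos x))
        (-(f x - (a + (f 0 - a) * Real.cos x + deriv f 0 * Real.sin x))) x :=
    ((hf' x).hasDerivAt.sub (((Real.hasDerivAt_sin x).const_mul (-(f 0 - a))).add
      ((Real.hasDerivAt_cos x).const_mul (deriv f 0)))).congr_deriv (by linear_combination h x)
  have := eq_zero_of_hasDerivAt_of_hasDerivAt_neg hw hw' (by simp) (by simp) x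
  linarith

theorem one_le_sq_intCast {n : ℤ} (hn : n ≠ 0) : 1 ≤ (n : ℝ) ^ 2 :=
  (one_le_sq_iff_one_le_abs _).2 (by exact_mod_cast Int.one_le_abs hn)

theorem twelve_mul_sq_intCast_sub_one_le {n : ℤ} (hn : n ≠ 0) :
    12 * ((n : ℝ) ^ 2 - 1) ≤ (n : ℝ) ^ 2 * ((n : ℝ) ^ 2 - 1) ^ 2 := by
  have h : (n : ℝ) ^ 2 = 1 ∨ 4 ≤ (n : ℝ) ^ 2 := by
    have : |n| = 1 ∨ 2 ≤ |n| := by have := Int.one_le_abs hn; omega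
    rcases this with h | h
    · left; exact_mod_cast (sq_abs n).symm.trans (by rw [h]; norm_num)
    · right; exact_mod_cast (show (4 : ℤ) ≤ n ^ 2 by nlinarith [sq_abs n])
  rcases h with h | h
  · simp [h]
  · nlinarith

noncomputable def circleCoeff (f : ℝ → ℝ) (n : ℤ) : ℂ :=
  fourierCoeffOn Real.two_pi_pos (fun x => (f x : ℂ)) n

theorem circleCoeff_eq_integral (f : ℝ → ℝ) (n : ℤ) :
    circleCoeff f n = (2 * π : ℝ)⁻¹ • ∫ x in (0:ℝ)..(2 * π),
      fourier (-n) (x : AddCircle (2 * π - 0)) • (f x : ℂ) := by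
  rw [circleCoeff, fourierCoeffOn_eq_integral, sub_zero, one_div]

theorem circleCoeff_zero (f : ℝ → ℝ) :
    circleCoeff f 0 = ((2 * π)⁻¹ * ∫ x in (0:ℝ)..(2 * π), f x : ℝ) := by
  simp [circleCoeff_eq_integral, intervalIntegral.integral_ofReal, Complex.real_smul]

theorem circleCoeff_add {f g : ℝ → ℝ} (hf : Continuous f) (hg : Continuous g) (n : ℤ) :
    circleCoeff (f + g) n = circleCoeff f n + circleCoeff g n := by
  have hfourier : Continuous fun x : ℝ => fourier (-n) (x : AddCircle (2 * π - 0)) :=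
    (map_continuous _).comp (AddCircle.continuous_mk' _)
  simp only [circleCoeff_eq_integral, Pi.add_apply, Complex.ofReal_add, smul_add]
  rw [intervalIntegral.integral_add, smul_add]
  · exact (hfourier.smul (Complex.continuous_ofReal.comp hf)).intervalIntegrable _ _
  · exact (hfourier.smul (Complex.continuous_ofReal.comp hg)).intervalIntegrable _ _

theorem circleCoeff_deriv {f : ℝ → ℝ} (hf : Differentiable ℝ f) (hf' : Continuous (deriv f))
    (hper : Function.Periodic f (2 * π)) (n : ℤ) :
    circleCoeff (deriv f) n = Complex.I * n * circleCoeff f n := by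
  have hends : f (2 * π) = f 0 := by simpa using hper 0
  rcases eq_or_ne n 0 with rfl | hn
  · rw [circleCoeff_zero, intervalIntegral.integral_deriv_eq_sub (fun x _ => hf x)
      (hf'.intervalIntegrable _ _), hends]
    simp
  have hderiv (x : ℝ) : HasDerivAt (fun y => (f y : ℂ)) ((deriv f x : ℝ) : ℂ) x :=
    (hf x).hasDerivAt.ofReal_comp
  have h := fourierCoeffOn_of_hasDerivAt Real.two_pi_pos hn (fun x _ => hderiv x)
    ((Complex.continuous_ofReal.comp hf').intervalIntegrable _ _)
  rw [← circleCoeff, ← circleCoeff, hends, sub_self, mul_zero, zero_sub] at h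
  rw [h]
  have hπ : (π : ℂ) ≠ 0 := by exact_mod_cast Real.pi_ne_zero
  field_simp
  push_cast
  ring

theorem circleCoeff_iteratedDeriv {f : ℝ → ℝ} {k : ℕ} (hf : ContDiff ℝ k f)
    (hper : Function.Periodic f (2 * π)) {m : ℕ} (hm : m ≤ k) (n : ℤ) :
    circleCoeff (iteratedDeriv m f) n = (Complex.I * n) ^ m * circleCoeff f n := by
  induction m with
  | zero => simp
  | succ m ih =>
    have hcont := hf.continuous_iteratedDeriv (m + 1) (by exact_mod_cast hm)
    rw [iteratedDeriv_succ] at hcont ⊢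
    rw [circleCoeff_deriv (hf.differentiable_iteratedDeriv m (by exact_mod_cast hm)) hcont
      (hper.iteratedDeriv m), ih (by omega), pow_succ]
    ring

theorem hasSum_sq_norm_circleCoeff {f : ℝ → ℝ} (hf : Continuous f) :
    HasSum (fun n => ‖circleCoeff f n‖ ^ 2) ((2 * π)⁻¹ * ∫ x in (0:ℝ)..(2 * π), f x ^ 2) := by
  have hc : Continuous fun x => (f x : ℂ) := Complex.continuous_ofReal.comp hf
  have hL2 : MemLp (fun x => (f x : ℂ)) 2 (volume.restrict (Set.Ioc 0 (2 * π))) :=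
    (memLp_two_iff_integrable_sq_norm hc.aestronglyMeasurable).2 (hc.norm.pow 2).integrableOn_Ioc
  simpa only [circleCoeff, Complex.norm_real, Real.norm_eq_abs, sq_abs, sub_zero, smul_eq_mul]
    using hasSum_sq_fourierCoeffOn Real.two_pi_pos hL2

section SupportFunction

variable {p : ℝ → ℝ}

theorem deriv_betaF (hp : ContDiff ℝ 3 p) : deriv (betaF p) = deriv p + iteratedDeriv 3 p := by
  ext θ
  unfold betaF
  rw [deriv_fun_add (hp.differentiable (by norm_num) θ)
    (hp.differentiable_iteratedDeriv 2 (by norm_num) θ), ← iteratedDeriv_succ]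
  rfl

theorem continuous_deriv_betaF (hp : ContDiff ℝ 3 p) : Continuous (deriv (betaF p)) := by
  rw [deriv_betaF hp, ← iteratedDeriv_one]
  exact (hp.continuous_iteratedDeriv 1 (by norm_num)).add (hp.continuous_iteratedDeriv 3 le_rfl)

theorem norm_sq_circleCoeff_deriv_betaF (hp : ContDiff ℝ 3 p)
    (hper : Function.Periodic p (2 * π)) (n : ℤ) :
    ‖circleCoeff (deriv (betaF p)) n‖ ^ 2
      = (n : ℝ) ^ 2 * ((n : ℝ) ^ 2 - 1) ^ 2 * ‖circleCoeff p n‖ ^ 2 := by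
  rw [deriv_betaF hp, ← iteratedDeriv_one,
    circleCoeff_add (hp.continuous_iteratedDeriv 1 (by norm_num))
      (hp.continuous_iteratedDeriv 3 le_rfl),
    circleCoeff_iteratedDeriv hp hper (by norm_num), circleCoeff_iteratedDeriv hp hper le_rfl]
  have : (Complex.I * n) ^ 1 * circleCoeff p n + (Complex.I * n) ^ 3 * circleCoeff p n
      = Complex.I * (((n : ℝ) - (n : ℝ) ^ 3 : ℝ) : ℂ) * circleCoeff p n := by
    push_cast
    linear_combination (n : ℂ) ^ 3 * Complex.I * circleCoeff p n * Complex.I_sq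
  rw [this, norm_mul, norm_mul, Complex.norm_I, one_mul, Complex.norm_real, Real.norm_eq_abs,
    mul_pow, sq_abs]
  ring

theorem hasSum_integral_sq_deriv_betaF (hp : ContDiff ℝ 3 p)
    (hper : Function.Periodic p (2 * π)) :
    HasSum (fun n : ℤ => 2 * π * ((n : ℝ) ^ 2 * ((n : ℝ) ^ 2 - 1) ^ 2 * ‖circleCoeff p n‖ ^ 2))
      (∫ θ in (0:ℝ)..(2 * π), deriv (betaF p) θ ^ 2) := by
  simpa only [mul_inv_cancel_left₀ Real.two_pi_pos.ne', norm_sq_circleCoeff_deriv_betaF hp hper]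
    using (hasSum_sq_norm_circleCoeff (continuous_deriv_betaF hp)).mul_left (2 * π)

theorem integral_mul_iteratedDeriv_two (hp : ContDiff ℝ 2 p)
    (hper : Function.Periodic p (2 * π)) :
    ∫ θ in (0:ℝ)..(2 * π), p θ * iteratedDeriv 2 p θ
      = -∫ θ in (0:ℝ)..(2 * π), deriv p θ ^ 2 := by
  have hp' : ContDiff ℝ 1 (deriv p) := hp.iterate_deriv' 1 1
  rw [iteratedDeriv_succ, iteratedDeriv_one,
    intervalIntegral.integral_mul_deriv_eq_deriv_mul
      (fun x _ => (hp.differentiable (by norm_num) x).hasDerivAt)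
      (fun x _ => (hp'.differentiable one_ne_zero x).hasDerivAt)
      ((hp.continuous_deriv (by norm_num)).intervalIntegrable _ _)
      ((hp'.continuous_deriv le_rfl).intervalIntegrable _ _)]
  simp only [hper.eq, hper.deriv.eq, sq, sub_self, zero_sub]

theorem algArea_eq (hp : ContDiff ℝ 2 p) (hper : Function.Periodic p (2 * π)) :
    algArea p
      = ((∫ θ in (0:ℝ)..(2 * π), p θ ^ 2) - ∫ θ in (0:ℝ)..(2 * π), deriv p θ ^ 2) / 2 := by
  have hsplit : ∫ θ in (0:ℝ)..(2 * π), p θ * betaF p θ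
      = (∫ θ in (0:ℝ)..(2 * π), p θ ^ 2)
        + ∫ θ in (0:ℝ)..(2 * π), p θ * iteratedDeriv 2 p θ := by
    simp only [betaF, mul_add, ← pow_two]
    exact intervalIntegral.integral_add ((hp.continuous.pow 2).intervalIntegrable _ _)
      ((hp.continuous.mul (hp.continuous_iteratedDeriv 2 le_rfl)).intervalIntegrable _ _)
  rw [algArea, hsplit, integral_mul_iteratedDeriv_two hp hper]
  ring

theorem norm_sq_circleCoeff_zero (p : ℝ → ℝ) :
    ‖circleCoeff p 0‖ ^ 2 = (algLen p / (2 * π)) ^ 2 := by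
  rw [circleCoeff_zero, Complex.norm_real, Real.norm_eq_abs, sq_abs, algLen, div_eq_inv_mul]

theorem hasSum_algLen_sq_div_sub_algArea (hp : ContDiff ℝ 2 p)
    (hper : Function.Periodic p (2 * π)) :
    HasSum (fun n : ℤ => π * (if n = 0 then 0 else (n : ℝ) ^ 2 - 1) * ‖circleCoeff p n‖ ^ 2)
      (algLen p ^ 2 / (4 * π) - algArea p) := by
  have hX := hasSum_sq_norm_circleCoeff hp.continuous
  have hY := hasSum_sq_norm_circleCoeff (hp.continuous_deriv (by norm_num))
  have hY_coeff (n : ℤ) :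
      ‖circleCoeff (deriv p) n‖ ^ 2 = (n : ℝ) ^ 2 * ‖circleCoeff p n‖ ^ 2 := by
    rw [circleCoeff_deriv (hp.differentiable (by norm_num)) (hp.continuous_deriv (by norm_num))
      hper, norm_mul, norm_mul, Complex.norm_I, one_mul, Complex.norm_intCast, mul_pow, sq_abs]
  simp only [hY_coeff] at hY
  have hsum := ((hY.sub hX).add (hasSum_ite_eq 0 (‖circleCoeff p 0‖ ^ 2))).mul_left π
  have hvalue : algLen p ^ 2 / (4 * π) - algArea p
      = π * ((2 * π)⁻¹ * (∫ θ in (0:ℝ)..(2 * π), deriv p θ ^ 2)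
        - (2 * π)⁻¹ * (∫ θ in (0:ℝ)..(2 * π), p θ ^ 2) + ‖circleCoeff p 0‖ ^ 2) := by
    rw [algArea_eq hp hper, norm_sq_circleCoeff_zero]
    field_simp
    ring
  rw [hvalue]
  refine hsum.congr_fun fun n => ?_
  split_ifs with hn
  · simp [hn]
  · ring

theorem algLen_sq_div_sub_algArea_nonneg (hp : ContDiff ℝ 2 p)
    (hper : Function.Periodic p (2 * π)) : 0 ≤ algLen p ^ 2 / (4 * π) - algArea p :=
  (hasSum_algLen_sq_div_sub_algArea hp hper).nonneg fun n => by
    split_ifs with hn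
    · simp
    · have := sub_nonneg.2 (one_le_sq_intCast hn)
      positivity

theorem twentyfour_mul_le_integral_sq_deriv_betaF (hp : ContDiff ℝ 3 p)
    (hper : Function.Periodic p (2 * π)) :
    24 * (algLen p ^ 2 / (4 * π) - algArea p)
      ≤ ∫ θ in (0:ℝ)..(2 * π), deriv (betaF p) θ ^ 2 := by
  refine hasSum_le (fun n => ?_)
    ((hasSum_algLen_sq_div_sub_algArea (hp.of_le (by norm_num)) hper).mul_left 24)
    (hasSum_integral_sq_deriv_betaF hp hper)
  split_ifs with hn
  · simp [hn]
  · nlinarith [mul_le_mul_of_nonneg_right (twelve_mul_sq_intCast_sub_one_le hn)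
      (mul_nonneg Real.two_pi_pos.le (sq_nonneg ‖circleCoeff p n‖))]

theorem betaF_eq_const_of_eq_cos_sin {a₀ a₁ b₁ : ℝ}
    (h : ∀ θ, p θ = a₀ + a₁ * Real.cos θ + b₁ * Real.sin θ) : betaF p = fun _ => a₀ := by
  have hp (θ : ℝ) : HasDerivAt p (-a₁ * Real.sin θ + b₁ * Real.cos θ) θ := by
    rw [show p = _ from funext h]
    exact (((Real.hasDerivAt_cos θ).const_mul a₁).const_add a₀).add
      ((Real.hasDerivAt_sin θ).const_mul b₁) |>.congr_deriv (by ring)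
  have hp' (θ : ℝ) : HasDerivAt (deriv p) (-a₁ * Real.cos θ - b₁ * Real.sin θ) θ := by
    rw [show deriv p = _ from funext fun θ => (hp θ).deriv]
    exact ((Real.hasDerivAt_sin θ).const_mul (-a₁)).add
      ((Real.hasDerivAt_cos θ).const_mul b₁) |>.congr_deriv (by ring)
  ext θ
  rw [betaF, iteratedDeriv_succ, iteratedDeriv_one, (hp' θ).deriv, h]
  ring

theorem exists_eq_cos_sin_of_deriv_betaF_eq_zero (hp : ContDiff ℝ 3 p)
    (h : ∀ θ, deriv (betaF p) θ = 0) :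
    ∃ a₀ a₁ b₁ : ℝ, ∀ θ, p θ = a₀ + a₁ * Real.cos θ + b₁ * Real.sin θ := by
  have hβ : Differentiable ℝ (betaF p) :=
    (hp.differentiable (by norm_num)).add (hp.differentiable_iteratedDeriv 2 (by norm_num))
  have hp' : ContDiff ℝ 2 (deriv p) := hp.iterate_deriv' 2 1
  refine ⟨betaF p 0, _, _, eq_cos_sin_of_add_deriv_deriv_eq_const
    (hp.differentiable (by norm_num)) (hp'.differentiable (by norm_num)) fun θ => ?_⟩
  rw [← is_const_of_deriv_eq_zero hβ h θ 0, betaF, iteratedDeriv_succ, iteratedDeriv_one]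

theorem integral_sq_deriv_betaF_eq_zero_iff (hp : ContDiff ℝ 3 p)
    (hper : Function.Periodic p (2 * π)) :
    ∫ θ in (0:ℝ)..(2 * π), deriv (betaF p) θ ^ 2 = 0 ↔
      ∃ a₀ a₁ b₁ : ℝ, ∀ θ, p θ = a₀ + a₁ * Real.cos θ + b₁ * Real.sin θ := by
  constructor
  · intro h
    have hper' : Function.Periodic (deriv (betaF p)) (2 * π) :=
      (hper.add (hper.iteratedDeriv 2)).deriv
    exact exists_eq_cos_sin_of_deriv_betaF_eq_zero hp
      (hper'.eq_zero_of_integral_sq_eq_zero (continuous_deriv_betaF hp) Real.two_pi_pos h)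
  · rintro ⟨a₀, a₁, b₁, h⟩
    simp [betaF_eq_const_of_eq_cos_sin h]

end SupportFunction

theorem beta_deriv_square_integral_inequality
    (p : ℝ → ℝ) (hp : ContDiff ℝ (⊤ : ℕ∞) p)
    (hper : Function.Periodic p (2 * π)) :
    (∀ ξ : ℝ, ξ ≤ 24 →
      ξ * ((algLen p) ^ 2 / (4 * π) - algArea p)
        ≤ ∫ θ in (0:ℝ)..(2 * π), (deriv (betaF p) θ) ^ 2) ∧
    (∀ ξ : ℝ, ξ < 24 →
      ((∫ θ in (0:ℝ)..(2 * π), (deriv (betaF p) θ) ^ 2)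
          = ξ * ((algLen p) ^ 2 / (4 * π) - algArea p) ↔
        ∃ a₀ a₁ b₁ : ℝ, ∀ θ : ℝ,
          p θ = a₀ + a₁ * Real.cos θ + b₁ * Real.sin θ)) := by
  have hp3 : ContDiff ℝ 3 p := contDiff_infty.1 hp 3
  have hdeficit := algLen_sq_div_sub_algArea_nonneg (hp3.of_le (by norm_num)) hper
  have h24 := twentyfour_mul_le_integral_sq_deriv_betaF hp3 hper
  refine ⟨fun ξ hξ => (mul_le_mul_of_nonneg_right hξ hdeficit).trans h24, fun ξ hξ => ?_⟩
  rw [← integral_sq_deriv_betaF_eq_zero_iff hp3 hper]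
  constructor
  · intro h
    rw [h, le_antisymm (by nlinarith) hdeficit, mul_zero]
  · intro h
    rw [h, le_antisymm (by linarith) hdeficit, mul_zero]
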